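/- Let p be a probability mass function sorted nonincreasingly with p K > 0 and suppose the tail mass ∑_{i>K} p i = 0 (i.e., the top-K carry all probability). Then H(p) = PRO_K + (∑_{i=1}^{K} p i - 1) * log (p K) = PRO_K, so the lower bound of Proposition 1 is tight. -/

import Mathlib

/-! A nonnegative tail with zero sum vanishes termwise, so the entropy series is the finite sum
over the top `K` indices, which carry total mass one. Splitting `log (p i / p K)` then leaves
exactly `-log (p K)` from `∑ p i * log (p K)`, and the residual factor `∑ p i - 1` is zero. -/

open Finset Real

theorem Finset.sum_Icc_one_eq_sum_range_succ {M : Type*} [AddCommMonoid M] (f : ℕ → M) (K : ℕ) :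
    ∑ i ∈ Icc 1 K, f i = ∑ i ∈ range K, f (i + 1) := by
  rw [← Ico_add_one_right_eq_Icc, range_eq_Ico, sum_Ico_add']

theorem tsum_succ_eq_sum_Icc_of_eq_zero {M : Type*} [AddCommMonoid M] [TopologicalSpace M]
    {f : ℕ → M} {K : ℕ} (hf : ∀ i, K < i → f i = 0) :
    ∑' i, f (i + 1) = ∑ i ∈ Icc 1 K, f i := by
  rw [sum_Icc_one_eq_sum_range_succ, tsum_eq_sum]
  intro i hi
  exact hf _ (by simpa using hi)

theorem eq_zero_of_tsum_tail_eq_zero {f : ℕ → ℝ} {K : ℕ} (hnn : ∀ i, 0 ≤ f i)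
    (hs : Summable fun i => f (i + 1)) (htail : ∑' j, f (K + 1 + j) = 0) :
    ∀ i, K < i → f i = 0 := by
  have hst : Summable fun j => f (K + 1 + j) :=
    ((summable_nat_add_iff K).2 hs).congr fun j => congrArg f (by omega)
  have hzero : (fun j => f (K + 1 + j)) = 0 :=
    (hasSum_zero_iff_of_nonneg fun _ => hnn _).1 (htail ▸ hst.hasSum)
  intro i hi
  obtain ⟨j, rfl⟩ := Nat.exists_eq_add_of_lt hi
  simpa [add_right_comm] using congrFun hzero j

theorem Real.mul_log_div (x : ℝ) {c : ℝ} (hc : c ≠ 0) :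
    x * log (x / c) = x * log x - x * log c := by
  rcases eq_or_ne x 0 with rfl | hx
  · simp
  · rw [log_div hx hc]
    ring

theorem sum_mul_log_div_of_sum_eq_one {ι : Type*} {s : Finset ι} {p : ι → ℝ} {c : ℝ} (hc : c ≠ 0)
    (hmass : ∑ i ∈ s, p i = 1) :
    ∑ i ∈ s, p i * log (p i / c) = ∑ i ∈ s, p i * log (p i) - log c := by
  simp only [mul_log_div _ hc, sum_sub_distrib, ← sum_mul, hmass, one_mul]

theorem entropy_eq_PRO_of_tail_zero_general (p : ℕ → ℝ) (K : ℕ)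
    (hnn : ∀ i, 0 ≤ p i)
    (hs : Summable (fun i => p (i + 1)))
    (hsum : ∑' i, p (i + 1) = 1)
    (hpK : 0 < p K)
    (htail : ∑' j : ℕ, p (K + 1 + j) = 0) :
    (-∑' i, p (i + 1) * Real.log (p (i + 1)) =
        (-Real.log (p K) - ∑ i ∈ Finset.Icc 1 K, p i * Real.log (p i / p K)) +
          (∑ i ∈ Finset.Icc 1 K, p i - 1) * Real.log (p K)) ∧
      -∑' i, p (i + 1) * Real.log (p (i + 1)) =
        -Real.log (p K) - ∑ i ∈ Finset.Icc 1 K, p i * Real.log (p i / p K) := by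
  have hvan := eq_zero_of_tsum_tail_eq_zero hnn hs htail
  have hmass : ∑ i ∈ Icc 1 K, p i = 1 := (tsum_succ_eq_sum_Icc_of_eq_zero hvan).symm.trans hsum
  have hent : ∑' i, p (i + 1) * log (p (i + 1)) = ∑ i ∈ Icc 1 K, p i * log (p i) :=
    tsum_succ_eq_sum_Icc_of_eq_zero (f := fun i => p i * log (p i)) fun i hi => by simp [hvan i hi]
  have hPRO : -∑' i, p (i + 1) * log (p (i + 1)) =
      -log (p K) - ∑ i ∈ Icc 1 K, p i * log (p i / p K) := by
    rw [hent, sum_mul_log_div_of_sum_eq_one hpK.ne' hmass]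
    ring
  exact ⟨by rw [hPRO, hmass]; ring, hPRO⟩

/-- Tightness of Proposition 1: when the tail mass beyond the top-K vanishes,
the entropy equals the PRO score (the residual term vanishes). -/
theorem entropy_eq_PRO_of_tail_zero (p : ℕ → ℝ) (K : ℕ)
    (hnn : ∀ i, 0 ≤ p i)
    (hs : Summable (fun i => p (i + 1)))
    (hsum : ∑' i, p (i + 1) = 1)
    (hsort : ∀ i j, 1 ≤ i → i ≤ j → p j ≤ p i)
    (hK : 1 ≤ K) (hpK : 0 < p K)
    (htail : ∑' j : ℕ, p (K + 1 + j) = 0) :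
    (-∑' i, p (i + 1) * Real.log (p (i + 1)) =
        (-Real.log (p K) - ∑ i ∈ Finset.Icc 1 K, p i * Real.log (p i / p K)) +
          (∑ i ∈ Finset.Icc 1 K, p i - 1) * Real.log (p K)) ∧
      -∑' i, p (i + 1) * Real.log (p (i + 1)) =
        -Real.log (p K) - ∑ i ∈ Finset.Icc 1 K, p i * Real.log (p i / p K) :=
  entropy_eq_PRO_of_tail_zero_general p K hnn hs hsum hpK htail
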